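/- arXiv:2604.08099 — 2 statements merged into one kernel-verified Lean document; each statement's English description precedes it below -/
import Mathlib

section
/- Let θ* ∈ (0, π/2) and ε ∈ [0, cos(θ*/2)·cos(θ*)). Let R̃ ∈ SO(3) satisfy trace(R̃) ≥ 1 + 2cos(θ*), and let v, w ∈ ℝ³ be unit vectors such that the operator norm of vvᵀ − wwᵀ (with respect to the Euclidean norm) is at most ε. Then (R̃v − v)ᵀ·(I − wwᵀ)·(R̃²v − v) ≥ (1 − vᵀR̃²v)·(cos(θ*) − ε/cos(θ*/2)); in particular this quantity is nonnegative. -/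
/-!
Put `u = R̃v − v` and `z = R̃²v − v = R̃u + u`, and split `I − wwᵀ = (I − vvᵀ) + (vvᵀ − wwᵀ)`.
For unit `v` the first part contributes exactly `(vᵀR̃v)(1 − vᵀR̃²v)`; the second is at most
`ε |u| |z|` in absolute value, where `|z|² = 2(1 − vᵀR̃²v)` and `|z| ≥ 2 cos(θ*/2) |u|`.
Both `vᵀR̃v ≥ cos θ*` and the bound on `|z|` come from `(tr R̃ − 1)|x|² ≤ 2 xᵀR̃x`: by
Cayley–Hamilton and `adj R̃ = R̃ᵀ`, the symmetric matrix `M = R̃ + R̃ᵀ − (tr R̃ − 1) I` satisfies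
`M² = (3 − tr R̃) M`, hence is positive semidefinite.
-/

open Matrix Real

/-- Euclidean norm of a vector in `ℝ³`. -/
noncomputable def enorm3 (v : Fin 3 → ℝ) : ℝ := Real.sqrt (v ⬝ᵥ v)

/-- Operator norm of a `3 × 3` real matrix with respect to the Euclidean norm on `ℝ³`. -/
noncomputable def opNorm (A : Matrix (Fin 3) (Fin 3) ℝ) : ℝ :=
  ‖(Matrix.toEuclideanLin A).toContinuousLinearMap‖

lemma dotProduct_self_nonneg {n R : Type*} [Fintype n] [Ring R] [LinearOrder R]
    [IsStrictOrderedRing R] (x : n → R) : 0 ≤ x ⬝ᵥ x :=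
  Finset.sum_nonneg fun i _ => mul_self_nonneg (x i)

section Orthogonal

variable {n : Type*} [Fintype n] [DecidableEq n] {R : Matrix n n ℝ}

lemma dotProduct_mulVec_mulVec_of_transpose_mul_self (hR : Rᵀ * R = 1) (x y : n → ℝ) :
    (R *ᵥ x) ⬝ᵥ (R *ᵥ y) = x ⬝ᵥ y := by
  rw [← dotProduct_transpose_mulVec, dotProduct_comm, mulVec_mulVec, hR, one_mulVec]

lemma transpose_mul_self_mul_self_eq_one (hR : Rᵀ * R = 1) : (R * R)ᵀ * (R * R) = 1 := by
  rw [transpose_mul, Matrix.mul_assoc, ← Matrix.mul_assoc Rᵀ R R, hR, Matrix.one_mul, hR]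

lemma trace_le_card_of_transpose_mul_self (hR : Rᵀ * R = 1) : R.trace ≤ Fintype.card n := by
  have hcol (i : n) : R i i ≤ 1 := by
    have h : ∑ k, R k i * R k i = 1 := by simpa [mul_apply] using congrFun (congrFun hR i) i
    have : R i i * R i i ≤ 1 :=
      h ▸ Finset.single_le_sum (f := fun k => R k i * R k i) (fun k _ => mul_self_nonneg _)
        (Finset.mem_univ i)
    nlinarith
  simpa [trace] using Finset.sum_le_sum fun i (_ : i ∈ Finset.univ) => hcol i

lemma dotProduct_mulVec_sub_self_self (hR : Rᵀ * R = 1) {v : n → ℝ} (hv : v ⬝ᵥ v = 1) :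
    (R *ᵥ v - v) ⬝ᵥ (R *ᵥ v - v) = 2 * (1 - v ⬝ᵥ (R *ᵥ v)) := by
  simp only [dotProduct_sub, sub_dotProduct, dotProduct_mulVec_mulVec_of_transpose_mul_self hR,
    dotProduct_comm (R *ᵥ v) v, hv]
  ring

lemma dotProduct_mulVec_le_one (hR : Rᵀ * R = 1) {v : n → ℝ} (hv : v ⬝ᵥ v = 1) :
    v ⬝ᵥ (R *ᵥ v) ≤ 1 := by
  have := dotProduct_self_nonneg (R *ᵥ v - v)
  rw [dotProduct_mulVec_sub_self_self hR hv] at this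
  linarith

lemma dotProduct_one_sub_vecMulVec_mulVec (x v y : n → ℝ) :
    x ⬝ᵥ ((1 - vecMulVec v v) *ᵥ y) = x ⬝ᵥ y - (x ⬝ᵥ v) * (v ⬝ᵥ y) := by
  rw [sub_mulVec, one_mulVec, dotProduct_sub, vecMulVec_mulVec, dotProduct_smul,
    op_smul_eq_mul]

lemma dotProduct_one_sub_vecMulVec_mul_self_mulVec (hR : Rᵀ * R = 1) {v : n → ℝ}
    (hv : v ⬝ᵥ v = 1) :
    (R *ᵥ v - v) ⬝ᵥ ((1 - vecMulVec v v) *ᵥ ((R * R) *ᵥ v - v))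
      = v ⬝ᵥ (R *ᵥ v) * (1 - v ⬝ᵥ ((R * R) *ᵥ v)) := by
  rw [dotProduct_one_sub_vecMulVec_mulVec, ← mulVec_mulVec]
  simp only [dotProduct_sub, sub_dotProduct, dotProduct_mulVec_mulVec_of_transpose_mul_self hR,
    dotProduct_comm (R *ᵥ v) v, hv]
  ring

end Orthogonal

lemma dotProduct_mulVec_self_nonneg_of_mul_self_eq_smul {n : Type*} [Fintype n]
    {M : Matrix n n ℝ} {c : ℝ} (hM : Mᵀ = M) (hc : 0 ≤ c) (h : M * M = c • M) (x : n → ℝ) :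
    0 ≤ x ⬝ᵥ (M *ᵥ x) := by
  have hsq : (M *ᵥ x) ⬝ᵥ (M *ᵥ x) = c * (x ⬝ᵥ (M *ᵥ x)) := by
    rw [← dotProduct_transpose_mulVec M x, mulVec_mulVec, hM, h, smul_mulVec, dotProduct_smul,
      smul_eq_mul]
  rcases hc.lt_or_eq with hc | rfl
  · exact nonneg_of_mul_nonneg_right (hsq ▸ dotProduct_self_nonneg (M *ᵥ x)) hc
  · rw [zero_mul, dotProduct_self_eq_zero] at hsq
    rw [hsq, dotProduct_zero]

lemma enorm3_sq (x : Fin 3 → ℝ) : enorm3 x ^ 2 = x ⬝ᵥ x :=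
  sq_sqrt (dotProduct_self_nonneg x)

lemma enorm3_nonneg (x : Fin 3 → ℝ) : 0 ≤ enorm3 x := sqrt_nonneg _

lemma enorm3_eq_norm (x : Fin 3 → ℝ) : enorm3 x = ‖WithLp.toLp 2 x‖ := by
  rw [norm_eq_sqrt_real_inner, EuclideanSpace.inner_toLp_toLp, star_trivial, enorm3]

lemma abs_dotProduct_mulVec_le (A : Matrix (Fin 3) (Fin 3) ℝ) (x y : Fin 3 → ℝ) :
    |x ⬝ᵥ (A *ᵥ y)| ≤ opNorm A * (enorm3 x * enorm3 y) := by
  have hAy : enorm3 (A *ᵥ y) ≤ opNorm A * enorm3 y := by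
    rw [enorm3_eq_norm, enorm3_eq_norm]
    exact (Matrix.toEuclideanLin A).toContinuousLinearMap.le_opNorm (WithLp.toLp 2 y)
  calc |x ⬝ᵥ (A *ᵥ y)| ≤ enorm3 x * enorm3 (A *ᵥ y) := by
        simpa only [enorm3_eq_norm, EuclideanSpace.inner_toLp_toLp, star_trivial,
          dotProduct_comm] using abs_real_inner_le_norm (WithLp.toLp 2 x) (WithLp.toLp 2 (A *ᵥ y))
    _ ≤ enorm3 x * (opNorm A * enorm3 y) := by gcongr; exact enorm3_nonneg x
    _ = opNorm A * (enorm3 x * enorm3 y) := by ring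

section SpecialOrthogonal

variable {R : Matrix (Fin 3) (Fin 3) ℝ}

lemma mul_self_fin_three (A : Matrix (Fin 3) (Fin 3) ℝ) :
    A * A = A.trace • A + A.adjugate - A.adjugate.trace • 1 := by
  ext i j
  fin_cases i <;> fin_cases j <;>
    simp [mul_apply, Fin.sum_univ_three, adjugate_fin_three, trace_fin_three] <;> ring

lemma adjugate_eq_transpose (hR : Rᵀ * R = 1) (hdet : R.det = 1) : R.adjugate = Rᵀ :=
  calc R.adjugate = Rᵀ * (R * R.adjugate) := by rw [← Matrix.mul_assoc, hR, Matrix.one_mul]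
    _ = Rᵀ := by rw [mul_adjugate, hdet, one_smul, Matrix.mul_one]

lemma mul_self_eq_of_det_eq_one (hR : Rᵀ * R = 1) (hdet : R.det = 1) :
    R * R = R.trace • R + Rᵀ - R.trace • 1 := by
  simpa [adjugate_eq_transpose hR hdet] using mul_self_fin_three R

lemma mul_self_symmPart (hR : Rᵀ * R = 1) (hdet : R.det = 1) :
    (R + Rᵀ - (R.trace - 1) • 1) * (R + Rᵀ - (R.trace - 1) • 1)
      = (3 - R.trace) • (R + Rᵀ - (R.trace - 1) • 1) := by
  have hR' : R * Rᵀ = 1 := mul_eq_one_comm.mp hR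
  have hsq := mul_self_eq_of_det_eq_one hR hdet
  have hsqT : Rᵀ * Rᵀ = R.trace • Rᵀ + R - R.trace • 1 := by
    simpa [transpose_mul] using congrArg transpose hsq
  simp only [Matrix.add_mul, Matrix.mul_add, Matrix.sub_mul, Matrix.mul_sub, smul_mul_assoc,
    mul_smul_comm, Matrix.one_mul, Matrix.mul_one, hR, hR', hsq, hsqT]
  module

lemma trace_sub_one_mul_dotProduct_le (hR : Rᵀ * R = 1) (hdet : R.det = 1) (u : Fin 3 → ℝ) :
    (R.trace - 1) * (u ⬝ᵥ u) ≤ 2 * (u ⬝ᵥ (R *ᵥ u)) := by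
  have htr : R.trace ≤ 3 := by simpa using trace_le_card_of_transpose_mul_self hR
  have hsymm : (R + Rᵀ - (R.trace - 1) • (1 : Matrix (Fin 3) (Fin 3) ℝ))ᵀ
      = R + Rᵀ - (R.trace - 1) • 1 := by
    rw [transpose_sub, transpose_add, transpose_transpose, transpose_smul, transpose_one, add_comm]
  have := dotProduct_mulVec_self_nonneg_of_mul_self_eq_smul hsymm (by linarith)
    (mul_self_symmPart hR hdet) u
  rw [sub_mulVec, add_mulVec, smul_mulVec, one_mulVec, dotProduct_sub, dotProduct_add,
    dotProduct_smul, dotProduct_transpose_mulVec, smul_eq_mul] at this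
  linarith

lemma trace_add_one_mul_dotProduct_le (hR : Rᵀ * R = 1) (hdet : R.det = 1) (u : Fin 3 → ℝ) :
    (R.trace + 1) * (u ⬝ᵥ u) ≤ (R *ᵥ u + u) ⬝ᵥ (R *ᵥ u + u) := by
  have := trace_sub_one_mul_dotProduct_le hR hdet u
  simp only [dotProduct_add, add_dotProduct, dotProduct_mulVec_mulVec_of_transpose_mul_self hR,
    dotProduct_comm (R *ᵥ u) u]
  linarith

lemma two_mul_mul_enorm3_mulVec_sub_self_le (hR : Rᵀ * R = 1) (hdet : R.det = 1) {κ : ℝ}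
    (hκ : 0 ≤ κ) (hκR : 4 * κ ^ 2 ≤ R.trace + 1) (v : Fin 3 → ℝ) :
    2 * κ * enorm3 (R *ᵥ v - v) ≤ enorm3 ((R * R) *ᵥ v - v) := by
  have hz : (R * R) *ᵥ v - v = R *ᵥ (R *ᵥ v - v) + (R *ᵥ v - v) := by
    rw [mulVec_sub, mulVec_mulVec]; abel
  set u := R *ᵥ v - v
  refine (pow_le_pow_iff_left₀ (by have := enorm3_nonneg u; positivity) (enorm3_nonneg _)
    two_ne_zero).mp ?_
  calc (2 * κ * enorm3 u) ^ 2 = 4 * κ ^ 2 * (u ⬝ᵥ u) := by rw [← enorm3_sq]; ring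
    _ ≤ (R.trace + 1) * (u ⬝ᵥ u) := mul_le_mul_of_nonneg_right hκR (dotProduct_self_nonneg u)
    _ ≤ enorm3 ((R * R) *ᵥ v - v) ^ 2 := by
      rw [hz, enorm3_sq]; exact trace_add_one_mul_dotProduct_le hR hdet u

end SpecialOrthogonal

lemma le_dotProduct_one_sub_vecMulVec_mulVec {R : Matrix (Fin 3) (Fin 3) ℝ} (hR : Rᵀ * R = 1)
    {v : Fin 3 → ℝ} (hv : v ⬝ᵥ v = 1) (w : Fin 3 → ℝ) {κ : ℝ} (hκ : 0 < κ)
    (hκR : 2 * κ * enorm3 (R *ᵥ v - v) ≤ enorm3 ((R * R) *ᵥ v - v)) :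
    (1 - v ⬝ᵥ ((R * R) *ᵥ v)) * (v ⬝ᵥ (R *ᵥ v) - opNorm (vecMulVec v v - vecMulVec w w) / κ)
      ≤ (R *ᵥ v - v) ⬝ᵥ ((1 - vecMulVec w w) *ᵥ ((R * R) *ᵥ v - v)) := by
  set u := R *ᵥ v - v
  set z := (R * R) *ᵥ v - v
  set E := vecMulVec v v - vecMulVec w w
  set c := 1 - v ⬝ᵥ ((R * R) *ᵥ v)
  have hz : enorm3 z ^ 2 = 2 * c := by
    rw [enorm3_sq, dotProduct_mulVec_sub_self_self (transpose_mul_self_mul_self_eq_one hR) hv]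
  have hsplit : u ⬝ᵥ ((1 - vecMulVec w w) *ᵥ z) = v ⬝ᵥ (R *ᵥ v) * c + u ⬝ᵥ (E *ᵥ z) := by
    rw [← dotProduct_one_sub_vecMulVec_mul_self_mulVec hR hv, ← dotProduct_add, ← add_mulVec,
      sub_add_sub_cancel]
  have hprod : enorm3 u * enorm3 z ≤ c / κ := by
    rw [le_div_iff₀ hκ]
    nlinarith [mul_le_mul_of_nonneg_right hκR (enorm3_nonneg z)]
  have herr : |u ⬝ᵥ (E *ᵥ z)| ≤ opNorm E / κ * c :=
    calc |u ⬝ᵥ (E *ᵥ z)| ≤ opNorm E * (enorm3 u * enorm3 z) := abs_dotProduct_mulVec_le E u z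
      _ ≤ opNorm E * (c / κ) := mul_le_mul_of_nonneg_left hprod (norm_nonneg _)
      _ = opNorm E / κ * c := by ring
  rw [hsplit]
  linarith [(abs_le.mp herr).1]

theorem stmt15_general (θs ε : ℝ) (hθ : θs ∈ Set.Ioo 0 (π / 2))
    (hε : ε ∈ Set.Ico 0 (Real.cos (θs / 2) * Real.cos θs))
    (Rt : Matrix (Fin 3) (Fin 3) ℝ) (hRt : Rtᵀ * Rt = 1) (hdet : Rt.det = 1)
    (htr : Matrix.trace Rt ≥ 1 + 2 * Real.cos θs)
    (v w : Fin 3 → ℝ) (hv : enorm3 v = 1)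
    (hvw : opNorm (vecMulVec v v - vecMulVec w w) ≤ ε) :
    (Rt *ᵥ v - v) ⬝ᵥ (((1 : Matrix (Fin 3) (Fin 3) ℝ) - vecMulVec w w) *ᵥ ((Rt * Rt) *ᵥ v - v))
        ≥ (1 - v ⬝ᵥ ((Rt * Rt) *ᵥ v)) * (Real.cos θs - ε / Real.cos (θs / 2))
      ∧ 0 ≤ (Rt *ᵥ v - v) ⬝ᵥ
          (((1 : Matrix (Fin 3) (Fin 3) ℝ) - vecMulVec w w) *ᵥ ((Rt * Rt) *ᵥ v - v)) := by
  obtain ⟨hθ0, hθ1⟩ := hθ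
  obtain ⟨hε0, hε1⟩ := hε
  have hκ : 0 < cos (θs / 2) := cos_pos_of_mem_Ioo ⟨by linarith, by linarith⟩
  have hv1 : v ⬝ᵥ v = 1 := by rw [← enorm3_sq, hv, one_pow]
  have hκR : 4 * cos (θs / 2) ^ 2 ≤ Rt.trace + 1 := by
    rw [cos_sq, mul_div_cancel₀ θs two_ne_zero]; linarith
  have hmain := le_dotProduct_one_sub_vecMulVec_mulVec hRt hv1 w hκ
    (two_mul_mul_enorm3_mulVec_sub_self_le hRt hdet hκ.le hκR v)
  have hc : 0 ≤ 1 - v ⬝ᵥ ((Rt * Rt) *ᵥ v) :=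
    sub_nonneg.mpr (dotProduct_mulVec_le_one (transpose_mul_self_mul_self_eq_one hRt) hv1)
  have hc1 : cos θs ≤ v ⬝ᵥ (Rt *ᵥ v) := by
    linarith [hv1 ▸ trace_sub_one_mul_dotProduct_le hRt hdet v]
  have hE : opNorm (vecMulVec v v - vecMulVec w w) / cos (θs / 2) ≤ ε / cos (θs / 2) :=
    div_le_div_of_nonneg_right hvw hκ.le
  have hεκ : ε / cos (θs / 2) < cos θs := (div_lt_iff₀ hκ).mpr (by linarith)
  have hbound := (mul_le_mul_of_nonneg_left (sub_le_sub hc1 hE) hc).trans hmain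
  exact ⟨hbound, (mul_nonneg hc (sub_nonneg.mpr hεκ.le)).trans hbound⟩

theorem stmt15 (θs ε : ℝ) (hθ : θs ∈ Set.Ioo 0 (π / 2))
    (hε : ε ∈ Set.Ico 0 (Real.cos (θs / 2) * Real.cos θs))
    (Rt : Matrix (Fin 3) (Fin 3) ℝ) (hRt : Rtᵀ * Rt = 1) (hdet : Rt.det = 1)
    (htr : Matrix.trace Rt ≥ 1 + 2 * Real.cos θs)
    (v w : Fin 3 → ℝ) (hv : enorm3 v = 1) (hw : enorm3 w = 1)
    (hvw : opNorm (vecMulVec v v - vecMulVec w w) ≤ ε) :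
    (Rt *ᵥ v - v) ⬝ᵥ (((1 : Matrix (Fin 3) (Fin 3) ℝ) - vecMulVec w w) *ᵥ ((Rt * Rt) *ᵥ v - v))
        ≥ (1 - v ⬝ᵥ ((Rt * Rt) *ᵥ v)) * (Real.cos θs - ε / Real.cos (θs / 2))
      ∧ 0 ≤ (Rt *ᵥ v - v) ⬝ᵥ
          (((1 : Matrix (Fin 3) (Fin 3) ℝ) - vecMulVec w w) *ᵥ ((Rt * Rt) *ᵥ v - v)) :=
  stmt15_general θs ε hθ hε Rt hRt hdet htr v w hv hvw
end

section
/- Let R̃ be a real 3×3 orthogonal matrix (R̃ᵀR̃ = I), let Π be a symmetric real 3×3 matrix, and let b̂ ∈ ℝ³. Then trace([ b̂ × (R̃·Π·(R̃ᵀb̂ − b̂)) ]× · R̃) = (R̃ᵀb̂ − b̂)ᵀ·Π·((R̃ᵀ)²·b̂ − b̂). -/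
open Matrix

/-- The skew-symmetric matrix `[x]ₓ` associated with the cross product: `[x]ₓ ⬝ y = x × y`. -/
def skew (x : Fin 3 → ℝ) : Matrix (Fin 3) (Fin 3) ℝ :=
  !![0, -x 2, x 1; x 2, 0, -x 0; -x 1, x 0, 0]

/-! The identity `[a × w]ₓ = w aᵀ - a wᵀ` turns the trace into two scalar products; in one the
orthogonality of `R̃` cancels `R̃ᵀ R̃`, in the other the symmetry of `Π` moves `R̃ᵀ R̃ᵀ` onto `b̂`. -/

lemma skew_crossProduct (a w : Fin 3 → ℝ) :
    skew (a ⨯₃ w) = vecMulVec w a - vecMulVec a w := by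
  ext i j
  fin_cases i <;> fin_cases j <;> simp [skew, crossProduct, vecMulVec] <;> ring

lemma trace_skew_crossProduct_mul (a w : Fin 3 → ℝ) (M : Matrix (Fin 3) (Fin 3) ℝ) :
    trace (skew (a ⨯₃ w) * M) = w ⬝ᵥ (a ᵥ* M) - a ⬝ᵥ (w ᵥ* M) := by
  rw [skew_crossProduct, Matrix.sub_mul, trace_sub, vecMulVec_mul, vecMulVec_mul,
    trace_vecMulVec, trace_vecMulVec]

section

variable {n α : Type*} [Fintype n] [CommSemiring α]

lemma dotProduct_mulVec_comm_of_transpose_eq {P : Matrix n n α} (hP : Pᵀ = P) (x y : n → α) :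
    x ⬝ᵥ (P *ᵥ y) = y ⬝ᵥ (P *ᵥ x) := by
  rw [dotProduct_mulVec, ← mulVec_transpose, hP, dotProduct_comm]

lemma vecMul_mulVec_of_transpose_mul_self [DecidableEq n] {R : Matrix n n α} (hR : Rᵀ * R = 1)
    (x : n → α) : (R *ᵥ x) ᵥ* R = x := by
  rw [← mulVec_transpose, mulVec_mulVec, hR, one_mulVec]

end

theorem stmt17 (Rt : Matrix (Fin 3) (Fin 3) ℝ) (hRt : Rtᵀ * Rt = 1)
    (Pr : Matrix (Fin 3) (Fin 3) ℝ) (hPr : Prᵀ = Pr)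
    (bhat : Fin 3 → ℝ) :
    Matrix.trace (skew (bhat ⨯₃ ((Rt * Pr) *ᵥ (Rtᵀ *ᵥ bhat - bhat))) * Rt)
      = (Rtᵀ *ᵥ bhat - bhat) ⬝ᵥ (Pr *ᵥ ((Rtᵀ * Rtᵀ) *ᵥ bhat - bhat)) := by
  set e := Rtᵀ *ᵥ bhat - bhat
  have h_first : ((Rt * Pr) *ᵥ e) ⬝ᵥ (bhat ᵥ* Rt) = e ⬝ᵥ (Pr *ᵥ ((Rtᵀ * Rtᵀ) *ᵥ bhat)) := by
    rw [dotProduct_mulVec_comm_of_transpose_eq hPr, dotProduct_comm, ← mulVec_mulVec,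
      dotProduct_mulVec, vecMul_vecMul, ← mulVec_transpose, transpose_mul]
  have h_second : bhat ⬝ᵥ (((Rt * Pr) *ᵥ e) ᵥ* Rt) = e ⬝ᵥ (Pr *ᵥ bhat) := by
    rw [← mulVec_mulVec, vecMul_mulVec_of_transpose_mul_self hRt,
      dotProduct_mulVec_comm_of_transpose_eq hPr]
  rw [trace_skew_crossProduct_mul, h_first, h_second, mulVec_sub, dotProduct_sub]
end
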